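/- Let C be a coinflip Markov category whose coinflip structure is externally iterable (each homset C(X,Y), as a midpoint algebra, is iterable in Set). Then it is internally iterable: for every morphism s : X → A ⊗ X in C, there is at most one u : X → A satisfying u = m(π_A ∘ s, u ∘ π_X ∘ s), and indeed exactly one. -/

import Mathlib

open CategoryTheory MonoidalCategory

class MarkovCat (C : Type*) [Category C] [MonoidalCategory C]
    [SymmetricCategory C] where
  copy : ∀ X : C, X ⟶ X ⊗ X
  del : ∀ X : C, X ⟶ 𝟙_ C
  copy_del : ∀ X : C, copy X ≫ (del X ▷ X) = (λ_ X).inv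
  copy_comm : ∀ X : C, copy X ≫ (β_ X X).hom = copy X
  copy_assoc : ∀ X : C,
    copy X ≫ (copy X ▷ X) ≫ (α_ X X X).hom = copy X ≫ (X ◁ copy X)
  del_natural : ∀ {X Y : C} (f : X ⟶ Y), f ≫ del Y = del X
  del_unit : del (𝟙_ C) = 𝟙 (𝟙_ C)
  copy_unit : copy (𝟙_ C) = (λ_ (𝟙_ C)).inv
  copy_tensor : ∀ X Y : C, copy (X ⊗ Y) = (copy X ⊗ₘ copy Y) ≫ tensorμ X X Y Y
  del_tensor : ∀ X Y : C, del (X ⊗ Y) = (del X ⊗ₘ del Y) ≫ (λ_ (𝟙_ C)).hom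

open MarkovCat

variable {C : Type*} [Category C] [MonoidalCategory C] [SymmetricCategory C]
  [MarkovCat C]

structure CoinflipStruct (C : Type*) [Category C] [MonoidalCategory C]
    [SymmetricCategory C] [MarkovCat C] where
  m : ∀ {X Y : C}, (X ⟶ Y) → (X ⟶ Y) → (X ⟶ Y)
  idem : ∀ {X Y : C} (f : X ⟶ Y), m f f = f
  comm : ∀ {X Y : C} (f g : X ⟶ Y), m f g = m g f
  medial : ∀ {X Y : C} (f g h k : X ⟶ Y), m (m f g) (m h k) = m (m f h) (m g k)
  pre : ∀ {X Y Z : C} (h : X ⟶ Y) (f g : Y ⟶ Z), h ≫ m f g = m (h ≫ f) (h ≫ g)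
  post : ∀ {X Y Z : C} (f g : X ⟶ Y) (h : Y ⟶ Z), m f g ≫ h = m (f ≫ h) (g ≫ h)

/-- Marginalization onto the first tensor factor. -/
def projFst (X Y : C) : X ⊗ Y ⟶ X := (X ◁ del Y) ≫ (ρ_ X).hom

/-- Marginalization onto the second tensor factor. -/
def projSnd (X Y : C) : X ⊗ Y ⟶ Y := (del X ▷ Y) ≫ (λ_ Y).hom

/-- If a coinflip Markov category is externally iterable (every hom-set is an
iterable midpoint algebra in Set), then it is internally iterable: every
`s : X ⟶ A ⊗ X` admits a unique `u : X ⟶ A` with `u = m(π_A ∘ s, u ∘ π_X ∘ s)`. -/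
theorem externally_iterable_implies_internally_iterable
    (m : CoinflipStruct C)
    (hext : ∀ (X Y : C) (Z : Type*) (s : Z → Z × (X ⟶ Y)),
      ∃! u : Z → (X ⟶ Y), ∀ z, u z = m.m (u (s z).1) (s z).2) :
    ∀ (X A : C) (s : X ⟶ A ⊗ X),
      ∃! u : X ⟶ A, u = m.m (s ≫ projFst A X) (s ≫ projSnd A X ≫ u) := by
  intro X A s
  set a : X ⟶ A := s ≫ projFst A X with ha
  set t : X ⟶ X := s ≫ projSnd A X with ht
  simp only [show ∀ g : X ⟶ A, s ≫ projSnd A X ≫ g = t ≫ g from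
    fun g => (Category.assoc _ _ _).symm]
  let p : ℕ → (X ⟶ X) := fun n => Nat.rec (𝟙 X) (fun _ ih => t ≫ ih) n
  have hp0 : p 0 = 𝟙 X := rfl
  have hpsucc : ∀ n, p (n + 1) = t ≫ p n := fun n => rfl
  have hpt : ∀ n, p n ≫ t = t ≫ p n := by
    intro n
    induction n with
    | zero => simp [hp0]
    | succ n ih => rw [hpsucc, Category.assoc, ih, Category.assoc]
  obtain ⟨u, hu, huu⟩ := hext X A (ULift ℕ)
    (fun z => (⟨z.down + 1⟩, p z.down ≫ a))
  simp only at hu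
  have hshift : ∀ n : ℕ, u ⟨n + 1⟩ = t ≫ u ⟨n⟩ := by
    obtain ⟨w, hw, hww⟩ := hext X A (ULift ℕ)
      (fun z => (⟨z.down + 1⟩, (t ≫ p z.down) ≫ a))
    have h1 : (fun z : ULift ℕ => u ⟨z.down + 1⟩) = w := by
      apply hww
      intro z
      simp only
      rw [hu ⟨z.down + 1⟩, hpsucc]
      try simp only [Category.assoc]
    have h2 : (fun z : ULift ℕ => t ≫ u z) = w := by
      apply hww
      intro z
      simp only
      rw [hu z, m.pre]
      try simp only [Category.assoc]
    intro n
    calc u ⟨n + 1⟩ = w ⟨n⟩ := congrFun h1 ⟨n⟩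
      _ = t ≫ u ⟨n⟩ := (congrFun h2 ⟨n⟩).symm
  refine ⟨u ⟨0⟩, ?_, ?_⟩
  · have h0 := hu ⟨0⟩
    rw [hshift 0, hp0, Category.id_comp, m.comm] at h0
    exact h0
  · intro u' hu'
    have hkey : (fun z : ULift ℕ => p z.down ≫ u') = u := by
      apply huu
      intro z
      simp only
      conv_lhs => rw [hu']
      rw [m.pre, m.comm, hpsucc, ← Category.assoc, hpt]
      try simp only [Category.assoc]
    calc u' = p 0 ≫ u' := by rw [hp0, Category.id_comp]
      _ = u ⟨0⟩ := congrFun hkey ⟨0⟩
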